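/- arXiv:0810.5618 — 2 statements merged into one kernel-verified Lean document; each statement's English description precedes it below -/
import Mathlib

section
/- Let 𝔤 be a linear subspace of 𝔰𝔬(N) satisfying condition (C1). Then for every endomorphism a of V and every nonzero u ∈ V*, if the V-valued alternating bilinear map u ∧ a (i.e. (x,y) ↦ u(x)a(y) − u(y)a(x)) lies in 𝔤², then there exist b ∈ 𝔤 and w ∈ V such that a = b + u ⊗ w, where u ⊗ w denotes the endomorphism x ↦ u(x)·w. -/
/-!
Write `u ∧ a = ∑ uᵢ ∧ Bᵢ` and set `C z := ∑ uᵢ(z) • Bᵢ`, a linear family in `𝔤` with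
`(u ∧ a)(y, z) = C y z - C z y`. On `ker u` the left side vanishes, so `(y, z, w) ↦ ⟪C y z, w⟫`
is symmetric in `(y, z)` there, while it is antisymmetric in `(z, w)` because `𝔤 ⊆ 𝔰𝔬(N)`.
Such a tensor is zero, so `p_n ∘ C y ∘ p_n = 0` for `y ∈ ker u = n^⊥` (`n` the Riesz vector
of `u`), and (C1) gives `C y = 0`. Hence `C z = u(z) • C x` for any `x` with `u x = 1`, and evaluating `u ∧ a` at `(x, z)` yields
`a = C x + u ⊗ (a x - C x x)`.
-/

open scoped RealInnerProductSpace

noncomputable section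

abbrev V (N : ℕ) := EuclideanSpace ℝ (Fin N)

/-- An endomorphism is skew-symmetric (i.e. belongs to `𝔰𝔬(N)`). -/
def skew {N : ℕ} (A : Module.End ℝ (V N)) : Prop :=
  ∀ x y : V N, ⟪A x, y⟫ = - ⟪x, A y⟫

/-- Orthogonal projection of `V N` onto the orthogonal complement of `v`. -/
def pv {N : ℕ} (v : V N) : Module.End ℝ (V N) :=
  (Submodule.span ℝ {v})ᗮ.subtype ∘ₗ
    (Submodule.orthogonalProjectionOnto (Submodule.span ℝ {v})ᗮ).toLinearMap

/-- Condition (C1): for every nonzero `v`, the map `A ↦ p_v ∘ A ∘ p_v` is injective on `𝔤`. -/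
def C1 {N : ℕ} (g : Set (Module.End ℝ (V N))) : Prop :=
  ∀ v : V N, v ≠ 0 → Set.InjOn (fun A => pv v ∘ₗ A ∘ₗ pv v) g

/-- `u ∧ B`: the `V`-valued alternating bilinear map `(x, y) ↦ u(x)•B(y) − u(y)•B(x)`. -/
def wedgeE {N : ℕ} (u : V N →ₗ[ℝ] ℝ) (B : Module.End ℝ (V N)) :
    V N →ₗ[ℝ] V N →ₗ[ℝ] V N :=
  u.smulRight B - (u.smulRight B).flip

/-- `𝔤²`: the span of the maps `u ∧ B` for `u ∈ V*` and `B ∈ 𝔤`. -/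
def gsq {N : ℕ} (g : Set (Module.End ℝ (V N))) :
    Submodule ℝ (V N →ₗ[ℝ] V N →ₗ[ℝ] V N) :=
  Submodule.span ℝ {C | ∃ (u : V N →ₗ[ℝ] ℝ) (B : Module.End ℝ (V N)), B ∈ g ∧ C = wedgeE u B}

theorem eq_zero_of_symm_of_antisymm {α G : Type*} [AddCommGroup G] [IsAddTorsionFree G]
    {S : Set α} (t : α → α → α → G)
    (hsymm : ∀ y ∈ S, ∀ z ∈ S, ∀ w ∈ S, t y z w = t z y w)
    (hanti : ∀ y ∈ S, ∀ z ∈ S, ∀ w ∈ S, t y z w = -t y w z)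
    {y z w : α} (hy : y ∈ S) (hz : z ∈ S) (hw : w ∈ S) : t y z w = 0 := by
  refine self_eq_neg.mp ?_
  calc t y z w = -t y w z := hanti y hy z hz w hw
    _ = -t w y z := by rw [hsymm y hy w hw z hz]
    _ = t w z y := by rw [hanti w hw y hy z hz, neg_neg]
    _ = t z w y := hsymm w hw z hz y hy
    _ = -t z y w := hanti z hz w hw y hy
    _ = -t y z w := by rw [hsymm z hz y hy w hw]

section

variable {N : ℕ}

@[simp]
theorem wedgeE_apply (u : V N →ₗ[ℝ] ℝ) (B : Module.End ℝ (V N)) (y z : V N) :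
    wedgeE u B y z = u y • B z - u z • B y := by
  simp [wedgeE]

theorem exists_linearMap_of_mem_gsq {g : Submodule ℝ (Module.End ℝ (V N))}
    {T : V N →ₗ[ℝ] V N →ₗ[ℝ] V N} (hT : T ∈ gsq (g : Set (Module.End ℝ (V N)))) :
    ∃ C : V N →ₗ[ℝ] Module.End ℝ (V N), (∀ z, C z ∈ g) ∧ ∀ y z, T y z = C y z - C z y := by
  induction hT using Submodule.span_induction with
  | mem T hT =>
    obtain ⟨u, B, hB, rfl⟩ := hT
    exact ⟨u.smulRight B, fun z => g.smul_mem _ hB, fun y z => by simp⟩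
  | zero => exact ⟨0, fun _ => g.zero_mem, fun y z => by simp⟩
  | add T₁ T₂ _ _ h₁ h₂ =>
    obtain ⟨C₁, hC₁g, hC₁⟩ := h₁
    obtain ⟨C₂, hC₂g, hC₂⟩ := h₂
    refine ⟨C₁ + C₂, fun z => g.add_mem (hC₁g z) (hC₂g z), fun y z => ?_⟩
    simp only [LinearMap.add_apply, hC₁, hC₂]
    abel
  | smul r T _ hT =>
    obtain ⟨C, hCg, hC⟩ := hT
    exact ⟨r • C, fun z => g.smul_mem r (hCg z), fun y z => by simp [hC, smul_sub]⟩

theorem pv_apply_mem_orthogonal (v x : V N) : pv v x ∈ (ℝ ∙ v)ᗮ :=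
  SetLike.coe_mem _

theorem pv_apply_eq_zero_of_mem {v x : V N} (hx : x ∈ (ℝ ∙ v)ᗮᗮ) : pv v x = 0 := by
  simp [pv, Submodule.orthogonalProjectionOnto_apply_of_mem_orthogonal hx]

theorem pv_comp_comp_pv_eq_zero {v : V N} {A : Module.End ℝ (V N)}
    (hA : ∀ z ∈ (ℝ ∙ v)ᗮ, ∀ w ∈ (ℝ ∙ v)ᗮ, ⟪A z, w⟫ = 0) : pv v ∘ₗ A ∘ₗ pv v = 0 := by
  ext1 x
  refine pv_apply_eq_zero_of_mem ((Submodule.mem_orthogonal _ _).mpr fun w hw => ?_)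
  rw [real_inner_comm]
  exact hA _ (pv_apply_mem_orthogonal v x) w hw

theorem C1.eq_zero {g : Submodule ℝ (Module.End ℝ (V N))} (hg : C1 (g : Set (Module.End ℝ (V N))))
    {v : V N} (hv : v ≠ 0) {A : Module.End ℝ (V N)} (hA : A ∈ g)
    (hAv : ∀ z ∈ (ℝ ∙ v)ᗮ, ∀ w ∈ (ℝ ∙ v)ᗮ, ⟪A z, w⟫ = 0) : A = 0 :=
  hg v hv hA g.zero_mem (by simp [pv_comp_comp_pv_eq_zero hAv])

theorem eq_add_smulRight_of_wedgeE_eq {u : V N →ₗ[ℝ] ℝ} {a : Module.End ℝ (V N)}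
    {C : V N →ₗ[ℝ] Module.End ℝ (V N)} (hC : ∀ y z, wedgeE u a y z = C y z - C z y)
    (hker : ∀ y, u y = 0 → C y = 0) {x : V N} (hx : u x = 1) :
    a = C x + u.smulRight (a x - C x x) := by
  refine LinearMap.ext fun z => ?_
  have hCz : C z = u z • C x := by
    have := hker (z - u z • x) (by simp [hx])
    rwa [map_sub, map_smul, sub_eq_zero] at this
  have hxz := hC x z
  rw [wedgeE_apply, hx, one_smul, hCz, LinearMap.smul_apply] at hxz
  simp only [LinearMap.add_apply, LinearMap.smulRight_apply]
  linear_combination (norm := module) hxz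

end

theorem statement2_general (N : ℕ) (g : Submodule ℝ (Module.End ℝ (V N)))
    (hso : ∀ A ∈ g, skew A) (hC1 : C1 (g : Set (Module.End ℝ (V N))))
    (a : Module.End ℝ (V N)) (u : V N →ₗ[ℝ] ℝ) (hu : u ≠ 0)
    (h : wedgeE u a ∈ gsq (g : Set (Module.End ℝ (V N)))) :
    ∃ b ∈ g, ∃ w : V N, a = b + u.smulRight w := by
  obtain ⟨C, hCg, hC⟩ := exists_linearMap_of_mem_gsq h
  obtain ⟨n, hn⟩ : ∃ n : V N, ∀ x, u x = ⟪n, x⟫ :=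
    ⟨(InnerProductSpace.toDual ℝ _).symm u.toContinuousLinearMap,
      fun _ => by rw [InnerProductSpace.toDual_symm_apply]; rfl⟩
  have hn0 : n ≠ 0 := by
    rintro rfl
    exact hu (LinearMap.ext fun x => by simp [hn])
  have hker : ∀ y, y ∈ (ℝ ∙ n)ᗮ ↔ u y = 0 := fun y => by
    rw [Submodule.mem_orthogonal_singleton_iff_inner_right, hn]
  have hsymm : ∀ y z, u y = 0 → u z = 0 → C y z = C z y := fun y z hy hz =>
    sub_eq_zero.mp <| by simpa [hy, hz] using (hC y z).symm
  have horth : ∀ y z w, u y = 0 → u z = 0 → u w = 0 → ⟪C y z, w⟫ = 0 := fun y z w =>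
    eq_zero_of_symm_of_antisymm (S := {y | u y = 0}) (fun y z w => ⟪C y z, w⟫)
      (fun y hy z hz _ _ => by rw [hsymm y z hy hz])
      (fun y _ z _ w _ => by rw [hso _ (hCg y), real_inner_comm])
  have hCker : ∀ y, u y = 0 → C y = 0 := fun y hy =>
    hC1.eq_zero hn0 (hCg y) fun z hz w hw => horth y z w hy ((hker z).mp hz) ((hker w).mp hw)
  obtain ⟨x, hx⟩ := LinearMap.surjective_of_ne_zero hu 1
  exact ⟨C x, hCg x, _, eq_add_smulRight_of_wedgeE_eq hC hCker hx⟩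

/-- If `𝔤 ⊆ 𝔰𝔬(N)` satisfies (C1), `a ∈ End(V)`, `u ∈ V* \ {0}` and `u ∧ a ∈ 𝔤²`, then
`a = b + u ⊗ w` for some `b ∈ 𝔤` and `w ∈ V`. -/
theorem statement2 (N : ℕ) (hN : 1 ≤ N) (g : Submodule ℝ (Module.End ℝ (V N)))
    (hso : ∀ A ∈ g, skew A) (hC1 : C1 (g : Set (Module.End ℝ (V N))))
    (a : Module.End ℝ (V N)) (u : V N →ₗ[ℝ] ℝ) (hu : u ≠ 0)
    (h : wedgeE u a ∈ gsq (g : Set (Module.End ℝ (V N)))) :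
    ∃ b ∈ g, ∃ w : V N, a = b + u.smulRight w :=
  statement2_general N g hso hC1 a u hu h
end
end

section
/- For every linear subspace 𝔤 of 𝔰𝔬(N), the subspace 𝔤² of the space of alternating bilinear maps V × V → V has dimension N·(dim 𝔤). -/
/-!
The map `T ↦ ((x, y) ↦ T x y - T y x)` from `Hom(V, 𝔤)` to `V`-valued alternating bilinear maps
sends `u.smulRight B` to `u ∧ B`; expanding `T` in a basis of `V` shows that its range is exactly
`𝔤²`. It is injective: a `T` in its kernel gives a trilinear form `⟪T x y, z⟫` that is symmetric
in `x, y` and, since `𝔤 ⊆ 𝔰𝔬(N)`, antisymmetric in `y, z`; such a form vanishes (the first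
prolongation of `𝔰𝔬(N)` is zero). Hence `dim 𝔤² = dim Hom(V, 𝔤) = N · dim 𝔤`.
-/

open scoped RealInnerProductSpace

noncomputable section

theorem LinearMap.eq_zero_of_symm_of_inner_skew {E : Type*} [NormedAddCommGroup E]
    [InnerProductSpace ℝ E] (T : E →ₗ[ℝ] E →ₗ[ℝ] E) (hsymm : ∀ x y, T x y = T y x)
    (hskew : ∀ x y z, ⟪T x y, z⟫ = -⟪y, T x z⟫) : T = 0 := by
  have hinner : ∀ x y z, ⟪T x y, z⟫ = 0 := fun x y z => by
    have : ⟪T x y, z⟫ = -⟪T x y, z⟫ :=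
      calc ⟪T x y, z⟫ = -⟪y, T z x⟫ := by rw [hskew, hsymm x z]
        _ = ⟪T y z, x⟫ := by rw [← hskew, hsymm]
        _ = -⟪z, T x y⟫ := by rw [hskew, hsymm y x]
        _ = -⟪T x y, z⟫ := by rw [real_inner_comm]
    linarith
  ext x y
  exact inner_self_eq_zero.mp (hinner x y _)

theorem Module.Basis.sum_coord_smulRight {ι R M P : Type*} [Fintype ι] [CommRing R]
    [AddCommGroup M] [Module R M] [AddCommGroup P] [Module R P] (b : Module.Basis ι R M)
    (T : M →ₗ[R] P) : ∑ i, (b.coord i).smulRight (T (b i)) = T :=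
  b.ext fun j => by classical simp [Finsupp.single_apply]

section Antisymmetrization

variable {R M : Type*} [CommRing R] [AddCommGroup M] [Module R M]

def antisymmetrization (g : Submodule R (Module.End R M)) : (M →ₗ[R] g) →ₗ[R] M →ₗ[R] M →ₗ[R] M where
  toFun T := g.subtype ∘ₗ T - (g.subtype ∘ₗ T).flip
  map_add' T S := by ext; simp only [LinearMap.add_apply, LinearMap.sub_apply,
    LinearMap.comp_apply, LinearMap.flip_apply, map_add]; abel
  map_smul' c T := by ext; simp [smul_sub]

theorem antisymmetrization_apply (g : Submodule R (Module.End R M)) (T : M →ₗ[R] g) (x y : M) :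
    antisymmetrization g T x y = (T x : Module.End R M) y - (T y : Module.End R M) x :=
  rfl

end Antisymmetrization

theorem antisymmetrization_smulRight {N : ℕ} (g : Submodule ℝ (Module.End ℝ (V N)))
    (u : V N →ₗ[ℝ] ℝ) (B : g) : antisymmetrization g (u.smulRight B) = wedgeE u B := by
  ext x y
  simp [antisymmetrization_apply, wedgeE]

theorem range_antisymmetrization {N : ℕ} (g : Submodule ℝ (Module.End ℝ (V N))) :
    LinearMap.range (antisymmetrization g) = gsq (g : Set (Module.End ℝ (V N))) := by
  apply le_antisymm
  · rintro _ ⟨T, rfl⟩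
    let b := (EuclideanSpace.basisFun (Fin N) ℝ).toBasis
    rw [← b.sum_coord_smulRight T, map_sum]
    refine Submodule.sum_mem _ fun i _ => Submodule.subset_span ?_
    exact ⟨b.coord i, T (b i), (T (b i)).2, antisymmetrization_smulRight g _ _⟩
  · rw [gsq, Submodule.span_le]
    rintro _ ⟨u, B, hB, rfl⟩
    exact ⟨u.smulRight ⟨B, hB⟩, antisymmetrization_smulRight g u ⟨B, hB⟩⟩

theorem antisymmetrization_injective {N : ℕ} (g : Submodule ℝ (Module.End ℝ (V N)))
    (hso : ∀ A ∈ g, skew A) : Function.Injective (antisymmetrization g) := by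
  refine (injective_iff_map_eq_zero _).mpr fun T hT => ?_
  have hsymm : ∀ x y, (g.subtype ∘ₗ T) x y = (g.subtype ∘ₗ T) y x := fun x y =>
    sub_eq_zero.mp (LinearMap.congr_fun₂ hT x y)
  have hzero := (g.subtype ∘ₗ T).eq_zero_of_symm_of_inner_skew hsymm
    fun x => hso _ (T x).2
  exact LinearMap.ext fun x => Subtype.ext (LinearMap.congr_fun hzero x)

theorem statement5_general (N : ℕ) (g : Submodule ℝ (Module.End ℝ (V N)))
    (hso : ∀ A ∈ g, skew A) :
    Module.finrank ℝ (gsq (g : Set (Module.End ℝ (V N)))) = N * Module.finrank ℝ g := by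
  rw [← range_antisymmetrization g,
    LinearMap.finrank_range_of_inj (antisymmetrization_injective g hso),
    Module.finrank_linearMap, finrank_euclideanSpace_fin]

/-- For every linear subspace `𝔤` of `𝔰𝔬(N)`, the subspace `𝔤²` has dimension `N·dim 𝔤`. -/
theorem statement5 (N : ℕ) (hN : 1 ≤ N) (g : Submodule ℝ (Module.End ℝ (V N)))
    (hso : ∀ A ∈ g, skew A) :
    Module.finrank ℝ (gsq (g : Set (Module.End ℝ (V N)))) = N * Module.finrank ℝ g :=
  statement5_general N g hso
end
end
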